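/- arXiv:1109.1977 — 2 statements merged into one kernel-verified Lean document; each statement's English description precedes it below -/
import Mathlib

section
/- Let A_y ⊂ BUC(ℝ^N) and A_τ ⊂ BUC(ℝ) be closed subalgebras, and let f ∈ BUC(ℝ^{N+1}) be a uniform limit of finite sums Σᵢ uᵢ(y) vᵢ(τ) with uᵢ ∈ A_y, vᵢ ∈ A_τ. For τ ∈ ℝ define the slice f^τ ∈ BUC(ℝ^N) by f^τ(y) = f(y,τ). Then f^τ ∈ A_y for every τ, and the family {f^τ : τ ∈ ℝ} is relatively compact in A_y with respect to the sup norm. -/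
open BoundedContinuousFunction

/-- Slices of elements of a product algebra (half of Theorem 2.1): if `f` on
`ℝ^N × ℝ` is a uniform limit of finite sums `Σᵢ uᵢ(y)vᵢ(τ)` with `uᵢ ∈ A_y`,
`vᵢ ∈ A_τ` (`A_y`, `A_τ` closed subalgebras), then every slice `f^τ = f(·,τ)`
belongs to `A_y`, and the family of slices is relatively compact in sup norm. -/
theorem product_algebra_slices (N : ℕ)
    (Ay : Subalgebra ℝ ((Fin N → ℝ) →ᵇ ℝ)) (hAy : IsClosed (Ay : Set ((Fin N → ℝ) →ᵇ ℝ)))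
    (Aτ : Subalgebra ℝ (ℝ →ᵇ ℝ)) (hAτ : IsClosed (Aτ : Set (ℝ →ᵇ ℝ)))
    (f : ((Fin N → ℝ) × ℝ) →ᵇ ℝ)
    (hf : f ∈ closure {g : ((Fin N → ℝ) × ℝ) →ᵇ ℝ |
      ∃ (m : ℕ) (u : Fin m → Ay) (v : Fin m → Aτ),
        ∀ z : (Fin N → ℝ) × ℝ, g z = ∑ i, (u i : (Fin N → ℝ) →ᵇ ℝ) z.1 * (v i : ℝ →ᵇ ℝ) z.2}) :
    (∀ τ : ℝ,
        f.compContinuous ((ContinuousMap.id (Fin N → ℝ)).prodMk (ContinuousMap.const _ τ)) ∈ Ay) ∧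
      IsCompact (closure (Set.range fun τ : ℝ =>
        f.compContinuous ((ContinuousMap.id (Fin N → ℝ)).prodMk (ContinuousMap.const _ τ)))) := by
  classical
  set T : Set (((Fin N → ℝ) × ℝ) →ᵇ ℝ) := {g : ((Fin N → ℝ) × ℝ) →ᵇ ℝ |
      ∃ (m : ℕ) (u : Fin m → Ay) (v : Fin m → Aτ),
        ∀ z : (Fin N → ℝ) × ℝ, g z = ∑ i, (u i : (Fin N → ℝ) →ᵇ ℝ) z.1 * (v i : ℝ →ᵇ ℝ) z.2}
    with hT
  set sl : (((Fin N → ℝ) × ℝ) →ᵇ ℝ) → ℝ → ((Fin N → ℝ) →ᵇ ℝ) :=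
    fun g τ => g.compContinuous
      ((ContinuousMap.id (Fin N → ℝ)).prodMk (ContinuousMap.const _ τ)) with hsl
  have hslapp : ∀ (g : ((Fin N → ℝ) × ℝ) →ᵇ ℝ) (τ : ℝ) (y : Fin N → ℝ),
      sl g τ y = g (y, τ) := by
    intro g τ y
    simp [hsl]
  have hdist : ∀ (g h : ((Fin N → ℝ) × ℝ) →ᵇ ℝ) (τ : ℝ),
      dist (sl g τ) (sl h τ) ≤ dist g h := by
    intro g h τ
    refine (BoundedContinuousFunction.dist_le dist_nonneg).2 fun y => ?_
    rw [hslapp, hslapp]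
    exact BoundedContinuousFunction.dist_coe_le_dist _
  -- slices of tensor sums
  have hslice_eq : ∀ (m : ℕ) (u : Fin m → Ay) (v : Fin m → Aτ)
      (g : ((Fin N → ℝ) × ℝ) →ᵇ ℝ),
      (∀ z : (Fin N → ℝ) × ℝ, g z = ∑ i, (u i : (Fin N → ℝ) →ᵇ ℝ) z.1 * (v i : ℝ →ᵇ ℝ) z.2) →
      ∀ τ, sl g τ = ∑ i, ((v i : ℝ →ᵇ ℝ) τ) • (u i : (Fin N → ℝ) →ᵇ ℝ) := by
    intro m u v g hg τ
    ext y
    rw [hslapp, hg]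
    simp [mul_comm]
  have hmem : ∀ g ∈ T, ∀ τ, sl g τ ∈ Ay := by
    rintro g ⟨m, u, v, hg⟩ τ
    rw [hslice_eq m u v g hg τ]
    exact Subalgebra.sum_mem _ fun i _ => Subalgebra.smul_mem _ (u i).2 _
  have h1 : ∀ τ, sl f τ ∈ Ay := by
    intro τ
    have : sl f τ ∈ closure (Ay : Set ((Fin N → ℝ) →ᵇ ℝ)) := by
      rw [Metric.mem_closure_iff]
      intro ε hε
      obtain ⟨g, hgT, hg⟩ := Metric.mem_closure_iff.1 hf ε hε
      exact ⟨sl g τ, hmem g hgT τ, lt_of_le_of_lt (hdist f g τ) hg⟩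
    rwa [hAy.closure_eq] at this
  have htb : TotallyBounded (Set.range (sl f)) := by
    rw [Metric.totallyBounded_iff]
    intro ε hε
    obtain ⟨g, hgT, hg⟩ := Metric.mem_closure_iff.1 hf (ε / 2) (by positivity)
    obtain ⟨m, u, v, hgeq⟩ := hgT
    set φ : (Fin m → ℝ) → ((Fin N → ℝ) →ᵇ ℝ) :=
      fun c => ∑ i, c i • (u i : (Fin N → ℝ) →ᵇ ℝ) with hφdef
    have hφ : Continuous φ :=
      continuous_finset_sum _ fun i _ => (continuous_apply i).smul continuous_const
    have hK : IsCompact (φ '' Set.univ.pi fun i =>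
        Set.Icc (-‖(v i : ℝ →ᵇ ℝ)‖) ‖(v i : ℝ →ᵇ ℝ)‖) :=
      (isCompact_univ_pi fun i => isCompact_Icc).image hφ
    obtain ⟨t, htfin, htcover⟩ :=
      Metric.totallyBounded_iff.1 hK.totallyBounded (ε / 2) (by positivity)
    refine ⟨t, htfin, ?_⟩
    rintro _ ⟨τ, rfl⟩
    have hgK : sl g τ ∈ φ '' Set.univ.pi fun i =>
        Set.Icc (-‖(v i : ℝ →ᵇ ℝ)‖) ‖(v i : ℝ →ᵇ ℝ)‖ := by
      refine ⟨fun i => (v i : ℝ →ᵇ ℝ) τ, fun i _ => ?_, ?_⟩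
      · exact abs_le.1 ((v i : ℝ →ᵇ ℝ).norm_coe_le_norm τ)
      · rw [hslice_eq m u v g hgeq τ]
    obtain ⟨c, hct, hc⟩ := Set.mem_iUnion₂.1 (htcover hgK)
    refine Set.mem_iUnion₂.2 ⟨c, hct, ?_⟩
    have : dist (sl f τ) c ≤ dist (sl f τ) (sl g τ) + dist (sl g τ) c := dist_triangle _ _ _
    have h2 : dist (sl f τ) (sl g τ) < ε / 2 := lt_of_le_of_lt (hdist f g τ) hg
    have h3 : dist (sl g τ) c < ε / 2 := Metric.mem_ball.1 hc
    exact Metric.mem_ball.2 (lt_of_le_of_lt this (by linarith))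
  exact ⟨h1, TotallyBounded.isCompact_of_isClosed htb.closure isClosed_closure⟩
end

section
/- (Gyöngy–Krylov criterion) Let X be a Polish space and (x_n)_{n≥0} a sequence of X-valued random variables on a probability space. Suppose that for every pair of subsequences (x_{n_k}) and (x_{m_k}), the sequence of joint laws of (x_{n_k}, x_{m_k}) on X × X has a further subsequence converging weakly to a probability measure ν with ν({(x,y) ∈ X × X : x = y}) = 1. Then (x_n) converges in probability to some X-valued random variable. -/
open MeasureTheory Filter

open scoped Topology ENNReal BoundedContinuousFunction

/-!
Testing the joint laws of `(x_p, x_q)` against the bounded continuous function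
`min 1 (dist / ε)`, which vanishes on the diagonal, shows that every pair of subsequences has a
further subsequence along which `P(ε ≤ dist(x_p, x_q)) → 0`; hence `(x_n)` is Cauchy in
probability. A sequence that is Cauchy in probability has a subsequence whose successive
differences have summable tail probabilities; by Borel–Cantelli and completeness it converges
almost surely, and its limit is then the limit in probability of the whole sequence.
-/

theorem Filter.tendsto_atTop_prod_of_forall_strictMono {α : Type*} {l : Filter α}
    {u : ℕ × ℕ → α}
    (h : ∀ n m : ℕ → ℕ, StrictMono n → StrictMono m →
      ∃ k : ℕ → ℕ, Tendsto (fun j => u (n (k j), m (k j))) atTop l) :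
    Tendsto u atTop l := by
  refine tendsto_of_subseq_tendsto fun ns hns => ?_
  rw [← prod_atTop_atTop_eq] at hns
  obtain ⟨φ, hφ, hfst⟩ := strictMono_subseq_of_tendsto_atTop (tendsto_fst.comp hns)
  obtain ⟨ψ, hψ, hsnd⟩ := strictMono_subseq_of_tendsto_atTop
    ((tendsto_snd.comp hns).comp hφ.tendsto_atTop)
  obtain ⟨k, hk⟩ := h _ _ (hfst.comp hψ) hsnd
  exact ⟨φ ∘ ψ ∘ k, hk⟩

section

variable {α E : Type*} [MeasurableSpace α] [PseudoMetricSpace E] {μ : Measure α}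

theorem measure_le_dist_le_add (ε : ℝ) (f g h : α → E) :
    μ {a | ε ≤ dist (f a) (h a)} ≤
      μ {a | ε / 2 ≤ dist (f a) (g a)} + μ {a | ε / 2 ≤ dist (g a) (h a)} := by
  refine (measure_mono fun a ha => ?_).trans (measure_union_le _ _)
  by_contra hcon
  simp only [Set.mem_union, Set.mem_ofPred_eq, not_or, not_le] at ha hcon
  linarith [dist_triangle (f a) (g a) (h a)]

theorem ae_cauchySeq_of_measure_dist_succ_lt {f : ℕ → α → E}
    (hf : ∀ k, μ {a | (2⁻¹ : ℝ) ^ k ≤ dist (f k a) (f (k + 1) a)} < 2⁻¹ ^ k) :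
    ∀ᵐ a ∂μ, CauchySeq fun k => f k a := by
  have hsum : ∑' k, μ {a | (2⁻¹ : ℝ) ^ k ≤ dist (f k a) (f (k + 1) a)} ≠ ∞ :=
    ne_top_of_le_ne_top (by simp [ENNReal.tsum_geometric])
      (ENNReal.tsum_le_tsum fun k => (hf k).le)
  filter_upwards [ae_eventually_notMem hsum] with a ha
  have hgeom := summable_geometric_of_lt_one (r := (2⁻¹ : ℝ)) (by norm_num) (by norm_num)
  refine cauchySeq_of_summable_dist (hgeom.of_norm_bounded_eventually_nat ?_)
  filter_upwards [ha] with k hk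
  rw [not_le] at hk
  rw [Real.norm_of_nonneg dist_nonneg]
  exact hk.le

def CauchyInMeasure (μ : Measure α) (f : ℕ → α → E) : Prop :=
  ∀ ε : ℝ, 0 < ε →
    Tendsto (fun p : ℕ × ℕ => μ {a | ε ≤ dist (f p.1 a) (f p.2 a)}) atTop (𝓝 0)

namespace CauchyInMeasure

variable {f : ℕ → α → E}

theorem exists_forall_ge_measure_lt (hf : CauchyInMeasure μ f) {ε : ℝ} (hε : 0 < ε)
    {δ : ℝ≥0∞} (hδ : 0 < δ) :
    ∃ N, ∀ p ≥ N, ∀ q ≥ N, μ {a | ε ≤ dist (f p a) (f q a)} < δ :=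
  eventually_atTop_prod_self'.1 ((hf ε hε).eventually (gt_mem_nhds hδ))

theorem exists_strictMono_measure_dist_succ_lt (hf : CauchyInMeasure μ f) :
    ∃ ns : ℕ → ℕ, StrictMono ns ∧
      ∀ k, μ {a | (2⁻¹ : ℝ) ^ k ≤ dist (f (ns k) a) (f (ns (k + 1)) a)} < 2⁻¹ ^ k := by
  obtain ⟨ns, hns, hsmall⟩ := extraction_forall_of_eventually'
    (P := fun k p => ∀ q ≥ p, μ {a | (2⁻¹ : ℝ) ^ k ≤ dist (f p a) (f q a)} < 2⁻¹ ^ k) fun k =>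
      (hf.exists_forall_ge_measure_lt (by positivity) (ENNReal.pow_pos (by norm_num) k)).imp
        fun N hN p hp q hq => hN p hp q (hp.trans hq)
  exact ⟨ns, hns, fun k => hsmall k _ (hns k.lt_succ_self).le⟩

theorem tendstoInMeasure_of_tendstoInMeasure_comp (hf : CauchyInMeasure μ f) {ns : ℕ → ℕ}
    (hns : Tendsto ns atTop atTop) {g : α → E}
    (hg : TendstoInMeasure μ (fun k => f (ns k)) atTop g) :
    TendstoInMeasure μ f atTop g := by
  rw [tendstoInMeasure_iff_dist] at hg ⊢
  intro ε hε
  rw [ENNReal.tendsto_atTop_zero]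
  intro δ hδ
  obtain ⟨N, hN⟩ := hf.exists_forall_ge_measure_lt (half_pos hε) (ENNReal.half_pos hδ.ne')
  obtain ⟨k, hgk, hNk⟩ := (((hg (ε / 2) (half_pos hε)).eventually
    (gt_mem_nhds (ENNReal.half_pos hδ.ne'))).and (hns.eventually_ge_atTop N)).exists
  refine ⟨N, fun p hp => ?_⟩
  calc μ {a | ε ≤ dist (f p a) (g a)}
      ≤ μ {a | ε / 2 ≤ dist (f p a) (f (ns k) a)} + μ {a | ε / 2 ≤ dist (f (ns k) a) (g a)} :=
        measure_le_dist_le_add ε _ _ _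
    _ ≤ δ / 2 + δ / 2 := add_le_add (hN p hp _ hNk).le hgk.le
    _ = δ := ENNReal.add_halves δ

theorem exists_tendstoInMeasure [IsFiniteMeasure μ] [CompleteSpace E] [MeasurableSpace E]
    [BorelSpace E] (hf : CauchyInMeasure μ f) (hfm : ∀ n, AEStronglyMeasurable (f n) μ) :
    ∃ g, Measurable g ∧ TendstoInMeasure μ f atTop g := by
  obtain ⟨ns, hns, hsmall⟩ := hf.exists_strictMono_measure_dist_succ_lt
  obtain ⟨g, hgm, hg⟩ := measurable_limit_of_tendsto_metrizable_ae
    (fun k => (hfm (ns k)).aemeasurable)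
    ((ae_cauchySeq_of_measure_dist_succ_lt hsmall).mono fun _ => cauchySeq_tendsto_of_complete)
  exact ⟨g, hgm, hf.tendstoInMeasure_of_tendstoInMeasure_comp hns.tendsto_atTop
    (tendstoInMeasure_of_tendsto_ae (fun k => hfm (ns k)) hg)⟩

end CauchyInMeasure

end

theorem BoundedContinuousFunction.exists_cutoff_diagonal {X : Type*} [PseudoMetricSpace X]
    {ε : ℝ} (hε : 0 < ε) :
    ∃ g : X × X →ᵇ ℝ, (∀ q, 0 ≤ g q) ∧ (∀ q : X × X, q.1 = q.2 → g q = 0) ∧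
      ∀ q : X × X, ε ≤ dist q.1 q.2 → 1 ≤ g q := by
  have hmem : ∀ q : X × X, 0 ≤ min 1 (dist q.1 q.2 / ε) ∧ min 1 (dist q.1 q.2 / ε) ≤ 1 :=
    fun q => ⟨le_min zero_le_one (div_nonneg dist_nonneg hε.le), min_le_left _ _⟩
  refine ⟨.mkOfBound ⟨fun q => min 1 (dist q.1 q.2 / ε), by fun_prop⟩ 1 fun q r => ?_,
    fun q => (hmem q).1, fun q hq => ?_, fun q hq => ?_⟩
  · rw [ContinuousMap.coe_mk, Real.dist_eq, abs_sub_le_iff]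
    constructor <;> linarith [hmem q, hmem r]
  · simp [hq]
  · simpa [one_le_div hε] using hq

section Diagonal

variable {α X : Type*} [MeasurableSpace α] {μ : Measure α} [IsFiniteMeasure μ]

theorem measure_le_dist_le_ofReal_integral [PseudoMetricSpace X] [SecondCountableTopology X]
    [MeasurableSpace X] [BorelSpace X]
    {ε : ℝ} {g : X × X →ᵇ ℝ} (hg0 : ∀ q, 0 ≤ g q)
    (hg1 : ∀ q : X × X, ε ≤ dist q.1 q.2 → 1 ≤ g q)
    {u v : α → X} (hu : Measurable u) (hv : Measurable v) :
    μ {a | ε ≤ dist (u a) (v a)} ≤ ENNReal.ofReal (∫ a, g (u a, v a) ∂μ) := by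
  have hint : Integrable (fun a => g (u a, v a)) μ :=
    (integrable_const ‖g‖).mono'
      (g.continuous.measurable.comp (hu.prodMk hv)).aestronglyMeasurable
      (ae_of_all _ fun a => g.norm_coe_le_norm _)
  calc μ {a | ε ≤ dist (u a) (v a)} ≤ μ {a | 1 ≤ g (u a, v a)} :=
        measure_mono fun a => hg1 (u a, v a)
    _ ≤ ENNReal.ofReal (∫ a, g (u a, v a) ∂μ) := by
      rw [ENNReal.le_ofReal_iff_toReal_le (measure_ne_top _ _) (integral_nonneg fun a => hg0 _)]
      simpa [measureReal_def] using
        mul_meas_ge_le_integral_of_nonneg (ae_of_all _ fun a => hg0 _) hint 1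

theorem tendsto_measure_le_dist_of_tendsto_integral_diagonal [MetricSpace X]
    [SecondCountableTopology X] [MeasurableSpace X] [BorelSpace X] {u v : ℕ → α → X}
    (hu : ∀ j, Measurable (u j)) (hv : ∀ j, Measurable (v j))
    {ν : Measure (X × X)} [IsProbabilityMeasure ν]
    (hdiag : ν {q | q.1 = q.2} = 1)
    (hlim : ∀ g : X × X →ᵇ ℝ,
      Tendsto (fun j => ∫ a, g (u j a, v j a) ∂μ) atTop (𝓝 (∫ q, g q ∂ν)))
    {ε : ℝ} (hε : 0 < ε) :
    Tendsto (fun j => μ {a | ε ≤ dist (u j a) (v j a)}) atTop (𝓝 0) := by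
  obtain ⟨g, hg0, hg_diag, hg1⟩ := BoundedContinuousFunction.exists_cutoff_diagonal (X := X) hε
  have hν : ∫ q, g q ∂ν = 0 := by
    have hae : ∀ᵐ q ∂ν, q.1 = q.2 :=
      (prob_compl_eq_zero_iff isClosed_diagonal.measurableSet).2 hdiag
    exact integral_eq_zero_of_ae (hae.mono hg_diag)
  have hupper := ENNReal.tendsto_ofReal (hlim g)
  rw [hν, ENNReal.ofReal_zero] at hupper
  exact tendsto_of_tendsto_of_tendsto_of_le_of_le tendsto_const_nhds hupper (fun j => zero_le)
    fun j => measure_le_dist_le_ofReal_integral hg0 hg1 (hu j) (hv j)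

end Diagonal

theorem cauchyInMeasure_of_forall_subseq_tendsto_diagonal
    {Ω X : Type*} [MeasurableSpace Ω] {P : Measure Ω} [IsFiniteMeasure P]
    [MetricSpace X] [SecondCountableTopology X] [MeasurableSpace X] [BorelSpace X]
    {x : ℕ → Ω → X} (hx : ∀ n, Measurable (x n))
    (h : ∀ n m : ℕ → ℕ, StrictMono n → StrictMono m →
      ∃ (k : ℕ → ℕ) (ν : Measure (X × X)), StrictMono k ∧ IsProbabilityMeasure ν ∧
        (∀ g : X × X →ᵇ ℝ,
          Tendsto (fun j => ∫ ω, g (x (n (k j)) ω, x (m (k j)) ω) ∂P) atTop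
            (𝓝 (∫ q, g q ∂ν))) ∧
        ν {q : X × X | q.1 = q.2} = 1) :
    CauchyInMeasure P x := by
  intro ε hε
  refine tendsto_atTop_prod_of_forall_strictMono fun n m hn hm => ?_
  obtain ⟨k, ν, -, hν, hlim, hdiag⟩ := h n m hn hm
  exact ⟨k, tendsto_measure_le_dist_of_tendsto_integral_diagonal (fun j => hx _) (fun j => hx _)
    hdiag hlim hε⟩

/-- Gyöngy–Krylov criterion for convergence in probability: if every pair of
subsequences of `(x_n)` admits a further subsequence along which the joint laws
converge weakly (i.e. against bounded continuous functions) to a probability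
measure concentrated on the diagonal, then `(x_n)` converges in probability. -/
theorem gyongy_krylov_criterion
    {Ω : Type*} [MeasurableSpace Ω] (P : Measure Ω) [IsProbabilityMeasure P]
    {X : Type*} [MetricSpace X] [CompleteSpace X] [TopologicalSpace.SeparableSpace X]
    [MeasurableSpace X] [BorelSpace X]
    (x : ℕ → Ω → X) (hx : ∀ n, Measurable (x n))
    (h : ∀ n m : ℕ → ℕ, StrictMono n → StrictMono m →
      ∃ (k : ℕ → ℕ) (ν : Measure (X × X)), StrictMono k ∧ IsProbabilityMeasure ν ∧
        (∀ g : BoundedContinuousFunction (X × X) ℝ,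
          Tendsto (fun j => ∫ ω, g (x (n (k j)) ω, x (m (k j)) ω) ∂P) atTop
            (nhds (∫ q, g q ∂ν))) ∧
        ν {q : X × X | q.1 = q.2} = 1) :
    ∃ y : Ω → X, Measurable y ∧
      ∀ ε : ℝ, 0 < ε →
        Tendsto (fun n => P {ω | ε < dist (x n ω) (y ω)}) atTop (nhds 0) := by
  obtain ⟨y, hy, hxy⟩ := CauchyInMeasure.exists_tendstoInMeasure
    (cauchyInMeasure_of_forall_subseq_tendsto_diagonal hx h) fun n => (hx n).aestronglyMeasurable
  refine ⟨y, hy, fun ε hε => ?_⟩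
  exact tendsto_of_tendsto_of_tendsto_of_le_of_le tendsto_const_nhds
    (tendstoInMeasure_iff_dist.1 hxy ε hε) (fun n => zero_le)
    fun n => measure_mono fun ω (hω : ε < _) => hω.le
end
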